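/- Suppose the regularizer N : ℝ^d → ℝ is differentiable and 1-strongly convex, and the loss ℓ : ℝ → ℝ is convex and differentiable with |ℓ'(z)| ≤ 1 for all z. Then the L₂-sensitivity of regularized ERM is at most 2/(nΛ): for any two datasets D and D' of size n that differ in exactly one entry, ‖argmin_f J(f, D) − argmin_f J(f, D')‖₂ ≤ 2/(nΛ). -/

import Mathlib

open MeasureTheory Real Set

noncomputable section

abbrev Vec (d : ℕ) := EuclideanSpace ℝ (Fin d)

abbrev Dataset (d n : ℕ) := Fin n → Vec d × ℝ

/-- All data points have norm at most 1 and labels in {-1, +1}. -/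
def ValidDataset {d n : ℕ} (D : Dataset d n) : Prop :=
  ∀ i, ‖(D i).1‖ ≤ 1 ∧ ((D i).2 = 1 ∨ (D i).2 = -1)

/-- Two datasets differ in (at most) one entry. -/
def Neighbor {d n : ℕ} (D D' : Dataset d n) : Prop :=
  ∃ j, ∀ i, i ≠ j → D i = D' i

/-- Regularized empirical risk J(f, D). -/
def J {d n : ℕ} (ℓ : ℝ → ℝ) (N : Vec d → ℝ) (Λ : ℝ) (D : Dataset d n) (f : Vec d) : ℝ :=
  (1 / (n : ℝ)) * ∑ i, ℓ ((D i).2 * (inner ℝ f (D i).1 : ℝ)) + Λ * N f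

/-- `lam`-strong convexity. -/
def SConvex {d : ℕ} (lam : ℝ) (H : Vec d → ℝ) : Prop :=
  ∀ α : ℝ, α ∈ Set.Ioo (0 : ℝ) 1 → ∀ f g : Vec d,
    H (α • f + (1 - α) • g) ≤
      α * H f + (1 - α) * H g - (lam / 2) * α * (1 - α) * ‖f - g‖ ^ 2

/-- Unnormalized measure on ℝ^d with density e^{-β‖b‖₂}. -/
def laplaceLike (d : ℕ) (β : ℝ) : Measure (Vec d) :=
  volume.withDensity fun b => ENNReal.ofReal (Real.exp (-β * ‖b‖))

/-- The probability measure on ℝ^d with density proportional to e^{-β‖b‖₂}. -/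
def noiseP (d : ℕ) (β : ℝ) : Measure (Vec d) :=
  (laplaceLike d β Set.univ)⁻¹ • laplaceLike d β

/-- ε-differential privacy for a randomized map from datasets to classifiers in ℝ^d. -/
def DiffPrivate {d n : ℕ} (ε : ℝ) (A : Dataset d n → Measure (Vec d)) : Prop :=
  ∀ D D' : Dataset d n, ValidDataset D → ValidDataset D' → Neighbor D D' →
    ∀ S : Set (Vec d), MeasurableSet S →
      A D S ≤ ENNReal.ofReal (Real.exp ε) * A D' S

/-- The slack term log(1 + 2c/(nΛ) + c²/(n²Λ²)) of Algorithm 2. -/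
def slack (c Λ : ℝ) (n : ℕ) : ℝ :=
  Real.log (1 + 2 * c / (n * Λ) + c ^ 2 / (n ^ 2 * Λ ^ 2))

/-- The adjusted privacy parameter ε_p' of Algorithm 2. -/
def objEps (εp c Λ : ℝ) (n : ℕ) : ℝ :=
  if 0 < εp - slack c Λ n then εp - slack c Λ n else εp / 2

/-- The additional regularization Δ of Algorithm 2. -/
def objDelta (εp c Λ : ℝ) (n : ℕ) : ℝ :=
  if 0 < εp - slack c Λ n then 0 else c / (n * (Real.exp (εp / 4) - 1)) - Λ

/-- The perturbed objective of Algorithm 2: J(f,D) + (1/n)bᵀf + (Δ/2)‖f‖². -/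
def Jpriv {d n : ℕ} (ℓ : ℝ → ℝ) (N : Vec d → ℝ) (Λ Δ : ℝ) (D : Dataset d n)
    (b f : Vec d) : ℝ :=
  J ℓ N Λ D f + (1 / (n : ℝ)) * (inner ℝ b f : ℝ) + (Δ / 2) * ‖f‖ ^ 2

/-- The regularizer N(f) = ½‖f‖². -/
def halfNormSq {d : ℕ} (f : Vec d) : ℝ := ‖f‖ ^ 2 / 2

/-!
Since `J(·, D)` is `Λ`-strongly convex, it grows quadratically away from its minimizer:
`J(g, D) - J(f₁, D) ≥ (Λ/2)‖g - f₁‖²`. Adding this bound at `g = f₂` to the one for `D'` at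
`g = f₁` gives `Λ‖f₁ - f₂‖² ≤ G(f₂) - G(f₁)` with `G = J(·, D) - J(·, D')`. Only the differing
entry survives in `G`, and `f ↦ ℓ(y⟪f, x⟫)` is 1-Lipschitz since `|ℓ'| ≤ 1` and `‖x‖ ≤ 1`, so `G` is
`2/n`-Lipschitz and `Λ‖f₁ - f₂‖ ≤ 2/n`.
-/

lemma convexOn_finset_sum {ι E : Type*} [AddCommGroup E] [Module ℝ E] {t : Set E}
    (ht : Convex ℝ t) (s : Finset ι) (f : ι → E → ℝ) (hf : ∀ i ∈ s, ConvexOn ℝ t (f i)) :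
    ConvexOn ℝ t fun x => ∑ i ∈ s, f i x := by
  classical
  induction s using Finset.induction_on with
  | empty => simpa using convexOn_const (0 : ℝ) ht
  | insert a s has ih =>
    simp only [Finset.sum_insert has]
    exact (hf a (Finset.mem_insert_self a s)).add
      (ih fun i hi => hf i (Finset.mem_insert_of_mem hi))

lemma convexOn_margin_loss {d : ℕ} {ℓ : ℝ → ℝ} (hℓ : ConvexOn ℝ univ ℓ) (x : Vec d) (y : ℝ) :
    ConvexOn ℝ univ fun f : Vec d => ℓ (y * inner ℝ f x) := by
  simpa [Function.comp_def, real_inner_comm] using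
    hℓ.comp_linearMap (y • (innerSL ℝ x).toLinearMap)

lemma abs_margin_loss_sub_le {d : ℕ} {ℓ : ℝ → ℝ} (hℓ : LipschitzWith 1 ℓ) {x : Vec d} {y : ℝ}
    (hx : ‖x‖ ≤ 1) (hy : |y| ≤ 1) (u v : Vec d) :
    |ℓ (y * inner ℝ u x) - ℓ (y * inner ℝ v x)| ≤ ‖u - v‖ := by
  calc |ℓ (y * inner ℝ u x) - ℓ (y * inner ℝ v x)|
      ≤ |y * inner ℝ u x - y * inner ℝ v x| := by
        simpa [Real.dist_eq] using hℓ.dist_le_mul (y * inner ℝ u x) (y * inner ℝ v x)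
    _ = |y| * |inner ℝ (u - v) x| := by rw [inner_sub_left, ← mul_sub, abs_mul]
    _ ≤ 1 * (‖u - v‖ * 1) := by
        gcongr
        exact (abs_real_inner_le_norm _ _).trans (by gcongr)
    _ = ‖u - v‖ := by ring

namespace SConvex

variable {d : ℕ} {lam : ℝ} {H : Vec d → ℝ}

lemma of_convexOn (hH : ConvexOn ℝ univ H) : SConvex 0 H := by
  intro α ⟨hα₀, hα₁⟩ f g
  simpa using hH.2 (mem_univ f) (mem_univ g) hα₀.le (by linarith) (by ring)

lemma add {mu : ℝ} {G : Vec d → ℝ} (hH : SConvex lam H) (hG : SConvex mu G) :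
    SConvex (lam + mu) fun f => H f + G f := by
  intro α hα f g
  linear_combination hH α hα f g + hG α hα f g

lemma const_mul {c : ℝ} (hc : 0 ≤ c) (hH : SConvex lam H) : SConvex (c * lam) fun f => c * H f := by
  intro α hα f g
  linear_combination c * hH α hα f g

lemma half_mul_norm_sub_sq_le {f : Vec d} (hH : SConvex lam H) (hf : ∀ g, H f ≤ H g) (g : Vec d) :
    lam / 2 * ‖g - f‖ ^ 2 ≤ H g - H f := by
  have hbound : ∀ α ∈ Ioo (0 : ℝ) 1, lam / 2 * (1 - α) * ‖g - f‖ ^ 2 ≤ H g - H f := by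
    intro α hα
    have key := (hf (α • g + (1 - α) • f)).trans (hH α hα g f)
    have : α * (lam / 2 * (1 - α) * ‖g - f‖ ^ 2) ≤ α * (H g - H f) := by linarith
    exact le_of_mul_le_mul_left this hα.1
  have hlim : Filter.Tendsto (fun α : ℝ => lam / 2 * (1 - α) * ‖g - f‖ ^ 2)
      (nhdsWithin 0 (Ioi 0)) (nhds (lam / 2 * (1 - 0) * ‖g - f‖ ^ 2)) :=
    (Continuous.tendsto (by fun_prop) 0).mono_left nhdsWithin_le_nhds
  simpa using le_of_tendsto hlim (Filter.eventually_of_mem (Ioo_mem_nhdsGT zero_lt_one) hbound)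

end SConvex

section ERM

variable {d n : ℕ} {ℓ : ℝ → ℝ} {N : Vec d → ℝ} {Λ : ℝ}

lemma sConvex_J (hℓ : ConvexOn ℝ univ ℓ) (hN : SConvex 1 N) (hΛ : 0 ≤ Λ) (D : Dataset d n) :
    SConvex Λ (J ℓ N Λ D) := by
  have hloss : ConvexOn ℝ univ fun f : Vec d => 1 / (n : ℝ) * ∑ i, ℓ ((D i).2 * inner ℝ f (D i).1) :=
    (convexOn_finset_sum convex_univ _ _ fun i _ => convexOn_margin_loss hℓ _ _).smul
      (by positivity)
  have h := (SConvex.of_convexOn hloss).add (hN.const_mul hΛ)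
  rwa [zero_add, mul_one] at h

lemma J_sub_J_of_forall_ne {D D' : Dataset d n} {j : Fin n} (hj : ∀ i, i ≠ j → D i = D' i)
    (f : Vec d) :
    J ℓ N Λ D f - J ℓ N Λ D' f =
      1 / (n : ℝ) * (ℓ ((D j).2 * inner ℝ f (D j).1) - ℓ ((D' j).2 * inner ℝ f (D' j).1)) := by
  have hsum : ∑ i, (ℓ ((D i).2 * inner ℝ f (D i).1) - ℓ ((D' i).2 * inner ℝ f (D' i).1)) =
      ℓ ((D j).2 * inner ℝ f (D j).1) - ℓ ((D' j).2 * inner ℝ f (D' j).1) :=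
    Fintype.sum_eq_single j fun i hi => by rw [hj i hi, sub_self]
  rw [J, J, ← hsum, Finset.sum_sub_distrib]
  ring

lemma J_sub_J_sub_le (hℓ : LipschitzWith 1 ℓ) {D D' : Dataset d n} (hD : ValidDataset D)
    (hD' : ValidDataset D') (hne : Neighbor D D') (f g : Vec d) :
    (J ℓ N Λ D f - J ℓ N Λ D' f) - (J ℓ N Λ D g - J ℓ N Λ D' g) ≤ 2 / n * ‖f - g‖ := by
  obtain ⟨j, hj⟩ := hne
  have habs : ∀ y : ℝ, (y = 1 ∨ y = -1) → |y| ≤ 1 := by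
    rintro y (rfl | rfl) <;> norm_num
  have h := abs_le.mp (abs_margin_loss_sub_le hℓ (hD j).1 (habs _ (hD j).2) f g)
  have h' := abs_le.mp (abs_margin_loss_sub_le hℓ (hD' j).1 (habs _ (hD' j).2) f g)
  rw [J_sub_J_of_forall_ne hj, J_sub_J_of_forall_ne hj, ← mul_sub]
  calc 1 / (n : ℝ) * _ ≤ 1 / n * (2 * ‖f - g‖) := by gcongr; linarith [h.1, h.2, h'.1, h'.2]
    _ = 2 / n * ‖f - g‖ := by ring

end ERM

theorem erm_sensitivity_general
    (d n : ℕ) (hn : 0 < n) (Λ : ℝ) (hΛ : 0 < Λ)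
    (ℓ : ℝ → ℝ) (N : Vec d → ℝ)
    (hNsc : SConvex 1 N)
    (hℓconv : ConvexOn ℝ Set.univ ℓ) (hℓdiff : Differentiable ℝ ℓ)
    (hℓderiv : ∀ z : ℝ, |deriv ℓ z| ≤ 1)
    (D D' : Dataset d n) (hD : ValidDataset D) (hD' : ValidDataset D')
    (hne : Neighbor D D')
    (f₁ f₂ : Vec d)
    (hf₁ : ∀ g : Vec d, J ℓ N Λ D f₁ ≤ J ℓ N Λ D g)
    (hf₂ : ∀ g : Vec d, J ℓ N Λ D' f₂ ≤ J ℓ N Λ D' g) :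
    ‖f₁ - f₂‖ ≤ 2 / ((n : ℝ) * Λ) := by
  have hℓlip : LipschitzWith 1 ℓ := lipschitzWith_of_nnnorm_deriv_le hℓdiff fun z => by
    rw [← NNReal.coe_le_coe]
    simpa using hℓderiv z
  have h₁ := (sConvex_J hℓconv hNsc hΛ.le D).half_mul_norm_sub_sq_le hf₁ f₂
  have h₂ := (sConvex_J hℓconv hNsc hΛ.le D').half_mul_norm_sub_sq_le hf₂ f₁
  have hgap := J_sub_J_sub_le (N := N) (Λ := Λ) hℓlip hD hD' hne f₂ f₁
  rw [norm_sub_rev] at h₁ hgap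
  have hquad : Λ * ‖f₁ - f₂‖ ^ 2 ≤ 2 / n * ‖f₁ - f₂‖ := by linarith
  rcases (norm_nonneg (f₁ - f₂)).eq_or_lt with h0 | hpos
  · rw [← h0]; positivity
  · have hlin : Λ * ‖f₁ - f₂‖ ≤ 2 / n :=
      le_of_mul_le_mul_right (by linarith) hpos
    rw [le_div_iff₀ (by positivity)]
    rw [le_div_iff₀ (by positivity)] at hlin
    linarith

/-- Corollary 8: if N is differentiable and 1-strongly convex and ℓ is
convex and differentiable with |ℓ'(z)| ≤ 1, then the L₂-sensitivity of regularized ERM is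
at most 2/(nΛ): for datasets differing in one entry, the minimizers are 2/(nΛ)-close. -/
theorem erm_sensitivity
    (d n : ℕ) (hn : 0 < n) (Λ : ℝ) (hΛ : 0 < Λ)
    (ℓ : ℝ → ℝ) (N : Vec d → ℝ)
    (hNdiff : Differentiable ℝ N) (hNsc : SConvex 1 N)
    (hℓconv : ConvexOn ℝ Set.univ ℓ) (hℓdiff : Differentiable ℝ ℓ)
    (hℓderiv : ∀ z : ℝ, |deriv ℓ z| ≤ 1)
    (D D' : Dataset d n) (hD : ValidDataset D) (hD' : ValidDataset D')
    (hne : Neighbor D D')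
    (f₁ f₂ : Vec d)
    (hf₁ : ∀ g : Vec d, J ℓ N Λ D f₁ ≤ J ℓ N Λ D g)
    (hf₂ : ∀ g : Vec d, J ℓ N Λ D' f₂ ≤ J ℓ N Λ D' g) :
    ‖f₁ - f₂‖ ≤ 2 / ((n : ℝ) * Λ) :=
  erm_sensitivity_general d n hn Λ hΛ ℓ N hNsc hℓconv hℓdiff hℓderiv D D' hD hD' hne f₁ f₂ hf₁ hf₂
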